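/- arXiv:2405.04317 — 4 statements merged into one kernel-verified Lean document; each statement's English description precedes it below -/
import Mathlib

section
/- Let f : M → N and ψ : X → N be continuous maps, and let π₁ : X ×_N M → X be the first projection from the fiber product X ×_N M = {(x,m) : ψ(x) = f(m)} (with the subspace topology of the product). Then IC(π₁) ≤ IC(f). -/
open Set

/-- The injective category number of a map: the smallest positive integer ℓ such that the
domain can be covered by ℓ open sets on each of which the map is injective; `⊤` if none. -/
noncomputable def IC {X Y : Type*} [TopologicalSpace X] (f : X → Y) : ℕ∞ :=
  sInf {n : ℕ∞ | ∃ k : ℕ, n = k ∧ 0 < k ∧ ∃ U : Fin k → Set X,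
    (∀ i, IsOpen (U i)) ∧ (⋃ i, U i) = Set.univ ∧ ∀ i, Set.InjOn f (U i)}

theorem stmt_6 {X M N : Type*} [TopologicalSpace X] [TopologicalSpace M] [TopologicalSpace N]
    (f : M → N) (hf : Continuous f) (ψ : X → N) (hψ : Continuous ψ) :
    IC (fun p : {p : X × M // ψ p.1 = f p.2} => p.1.1) ≤ IC f := by
  apply sInf_le_sInf
  rintro n ⟨k, rfl, hk, U, hopen, hcov, hinj⟩
  refine ⟨k, rfl, hk, fun i => (fun p : {p : X × M // ψ p.1 = f p.2} => p.1.2) ⁻¹' U i, ?_, ?_, ?_⟩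
  · intro i
    exact (hopen i).preimage (continuous_snd.comp continuous_subtype_val)
  · ext p
    simp only [mem_iUnion, mem_preimage, mem_univ, iff_true]
    have := hcov ▸ mem_univ p.1.2
    simpa using (mem_iUnion.mp (hcov ▸ mem_univ p.1.2))
  · intro i p hp q hq h
    have hm : p.1.2 = q.1.2 := by
      apply hinj i hp hq
      have hpq : ψ p.1.1 = f p.1.2 := p.2
      have hqq : ψ q.1.1 = f q.1.2 := q.2
      simp only at h
      rw [← hpq, ← hqq, h]
    exact Subtype.ext (Prod.ext h hm)
end

section
/- Let M be a T₁ space and f : M → N a locally injective continuous map whose only multiple points are y₁, ..., y_ℓ ∈ f(M), where y_i has fiber of finite cardinality k_i ≥ 2 and every other point of f(M) has a one-element fiber. Then IC(f) = max_{1 ≤ i ≤ ℓ} k_i. -/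
open Set

theorem stmt_10 {M N : Type*} [TopologicalSpace M] [TopologicalSpace N] [T1Space M]
    (f : M → N) (hf : Continuous f)
    (hloc : ∀ x : M, ∃ U : Set M, IsOpen U ∧ x ∈ U ∧ Set.InjOn f U)
    (ℓ : ℕ) (hℓ : 0 < ℓ) (y : Fin ℓ → N) (hy : Function.Injective y)
    (hyr : ∀ i, y i ∈ Set.range f)
    (k : Fin ℓ → ℕ) (hk : ∀ i, 2 ≤ k i)
    (hfib : ∀ i, (f ⁻¹' {y i}).encard = k i)
    (honly : ∀ z ∈ Set.range f, z ∉ Set.range y → (f ⁻¹' {z}).encard = 1) :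
    IC f = ((Finset.univ.sup k : ℕ) : ℕ∞) := by
  classical
  set m := Finset.univ.sup k with hm
  have hne : Nonempty (Fin ℓ) := ⟨⟨0, hℓ⟩⟩
  obtain ⟨i₀, -, hi₀⟩ := Finset.exists_mem_eq_sup (Finset.univ : Finset (Fin ℓ))
    Finset.univ_nonempty k
  have hm2 : 2 ≤ m := by rw [hm, hi₀]; exact hk i₀
  -- key: the only non-injectivity happens inside the fibers of the y i
  have key : ∀ w w', f w = f w' → w ≠ w' → ∃ i, f w = y i := by
    intro w w' h hne'
    by_contra hcon
    push_neg at hcon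
    have hz : f w ∉ Set.range y := by rintro ⟨i, hi⟩; exact hcon i hi.symm
    have h1 := honly (f w) ⟨w, rfl⟩ hz
    obtain ⟨a, ha⟩ := Set.encard_eq_one.mp h1
    have hw : w ∈ f ⁻¹' {f w} := rfl
    have hw' : w' ∈ f ⁻¹' {f w} := by simp [← h]
    rw [ha] at hw hw'
    exact hne' (hw.trans hw'.symm)
  have hFfin : ∀ i, (f ⁻¹' {y i}).Finite := fun i =>
    Set.finite_of_encard_eq_coe (hfib i)
  have hcard : ∀ i, (f ⁻¹' {y i}).ncard = k i := by
    intro i; rw [Set.ncard_def, hfib i]; simp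
  -- enumerate each fiber
  have henum : ∀ i, ∃ g : Fin (k i) → M, (∀ j, f (g j) = y i) ∧
      ∀ w, f w = y i → ∃ j, g j = w := by
    intro i
    haveI : Fintype ↥(f ⁻¹' {y i}) := (hFfin i).fintype
    have hc : Fintype.card ↥(f ⁻¹' {y i}) = k i := by
      rw [← Nat.card_eq_fintype_card, Nat.card_coe_set_eq, hcard i]
    let e := (Fintype.equivFinOfCardEq hc).symm
    refine ⟨fun j => (e j : M), fun j => (e j).2, fun w hw => ⟨e.symm ⟨w, hw⟩, ?_⟩⟩
    simp
  choose g hg1 hg2 using henum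
  have hkm : ∀ i, k i ≤ m := fun i => Finset.le_sup (Finset.mem_univ i)
  -- the cover
  have pad : ∀ (i : Fin ℓ) (j : Fin m), min (j : ℕ) (k i - 1) < k i := by
    intro i j; have := hk i; omega
  set U : Fin m → Set M :=
    fun j => {w | ∀ i, f w = y i → w = g i ⟨min (j : ℕ) (k i - 1), pad i j⟩} with hU
  have hUopen : ∀ j, IsOpen (U j) := by
    intro j
    rw [← isClosed_compl_iff]
    have : (U j)ᶜ = ⋃ i, ((f ⁻¹' {y i}) \ {g i ⟨min (j : ℕ) (k i - 1), pad i j⟩}) := by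
      ext w
      simp only [hU, mem_compl_iff, mem_setOf_eq, not_forall, mem_iUnion, mem_diff,
        mem_preimage, mem_singleton_iff]
      tauto
    rw [this]
    exact isClosed_iUnion_of_finite fun i =>
      (((hFfin i).subset diff_subset).isClosed)
  have hUcov : (⋃ j, U j) = Set.univ := by
    refine eq_univ_of_forall fun w => ?_
    by_cases hw : ∃ i, f w = y i
    · obtain ⟨i, hi⟩ := hw
      obtain ⟨j₀, hj₀⟩ := hg2 i w hi
      refine mem_iUnion.mpr ⟨⟨(j₀ : ℕ), lt_of_lt_of_le j₀.2 (hkm i)⟩, ?_⟩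
      intro i' hi'
      have : i' = i := hy (hi'.symm.trans hi)
      subst this
      rw [← hj₀]
      congr 1
      ext
      have := j₀.2
      simp
      omega
    · push_neg at hw
      exact mem_iUnion.mpr ⟨⟨0, by omega⟩, fun i hi => absurd hi (hw i)⟩
  have hUinj : ∀ j, Set.InjOn f (U j) := by
    intro j w hw w' hw' hww'
    by_contra hne'
    obtain ⟨i, hi⟩ := key w w' hww' hne'
    have e1 := hw i hi
    have e2 := hw' i (hww' ▸ hi)
    exact hne' (e1.trans e2.symm)
  -- upper bound
  have hub : IC f ≤ (m : ℕ∞) :=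
    sInf_le ⟨m, rfl, by omega, U, hUopen, hUcov, hUinj⟩
  -- lower bound
  have hlb : (m : ℕ∞) ≤ IC f := by
    refine le_sInf fun n hn => ?_
    obtain ⟨c, rfl, hc, V, hVo, hVcov, hVinj⟩ := hn
    refine Nat.cast_le.mpr ?_
    set F := f ⁻¹' {y i₀} with hF
    haveI : Fintype ↥F := (hFfin i₀).fintype
    have hsel : ∀ w : ↥F, ∃ j : Fin c, (w : M) ∈ V j := by
      intro w
      have : (w : M) ∈ ⋃ j, V j := hVcov ▸ mem_univ _
      exact mem_iUnion.mp this
    choose φ hφ using hsel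
    have hφinj : Function.Injective φ := by
      intro a b hab
      have hfa : f (a : M) = y i₀ := a.2
      have hfb : f (b : M) = y i₀ := b.2
      have := hVinj (φ a) (hφ a) (hab ▸ hφ b) (hfa.trans hfb.symm)
      exact Subtype.ext this
    have hcF : Fintype.card ↥F = m := by
      rw [← Nat.card_eq_fintype_card, Nat.card_coe_set_eq, hcard i₀, hm, hi₀]
    calc m = Fintype.card ↥F := hcF.symm
      _ ≤ Fintype.card (Fin c) := Fintype.card_le_of_injective φ hφinj
      _ = c := Fintype.card_fin c
  exact le_antisymm hub hlb
end

section
/- Let M be a T₁ space and f : M → N a locally injective continuous map that is injective outside one finite fiber: there is a point y ∈ f(M) with |f⁻¹(y)| = k ≥ 2 and all other fibers are singletons. Then IC(f) = k. -/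
open Set

theorem stmt_11 {M N : Type*} [TopologicalSpace M] [TopologicalSpace N] [T1Space M]
    (f : M → N) (hf : Continuous f)
    (hloc : ∀ x : M, ∃ U : Set M, IsOpen U ∧ x ∈ U ∧ Set.InjOn f U)
    (y : N) (hy : y ∈ Set.range f) (k : ℕ) (hk : 2 ≤ k)
    (hfib : (f ⁻¹' {y}).encard = k)
    (honly : ∀ z ∈ Set.range f, z ≠ y → (f ⁻¹' {z}).encard = 1) :
    IC f = (k : ℕ∞) := by
  classical
  have hfin : (f ⁻¹' {y}).Finite := by
    rw [← Set.encard_ne_top_iff, hfib]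
    exact WithTop.natCast_ne_top k
  have hfinsub : Finite (f ⁻¹' {y}) := hfin.to_subtype
  have hcard : Nat.card (f ⁻¹' {y}) = k := by
    rw [Nat.card_coe_set_eq, Set.ncard_def, hfib]
    simp
  -- injectivity away from the big fiber
  have hinj_out : ∀ a b : M, f a = f b → f a ≠ y → a = b := by
    intro a b hab hne
    have h1 := honly (f a) ⟨a, rfl⟩ hne
    obtain ⟨c, hc⟩ := Set.encard_eq_one.mp h1
    have ha : a ∈ f ⁻¹' {f a} := by simp
    have hb : b ∈ f ⁻¹' {f a} := by simp [hab]
    rw [hc] at ha hb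
    simp only [Set.mem_singleton_iff] at ha hb
    rw [ha, hb]
  apply le_antisymm
  · -- IC f ≤ k : build a cover
    have e : (f ⁻¹' {y}) ≃ Fin k := Finite.equivFinOfCardEq hcard
    choose V hVopen hVmem hVinj using fun x : M => hloc x
    set U : Fin k → Set M := fun i =>
      (V (e.symm i : M) \ (f ⁻¹' {y} \ {(e.symm i : M)})) ∪ (f ⁻¹' {y})ᶜ with hU
    apply sInf_le
    refine ⟨k, rfl, by omega, U, ?_, ?_, ?_⟩
    · intro i
      apply IsOpen.union
      · exact (hVopen _).sdiff (hfin.subset (Set.diff_subset)).isClosed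
      · exact hfin.isClosed.isOpen_compl
    · ext x
      simp only [Set.mem_iUnion, Set.mem_univ, iff_true]
      by_cases hx : f x = y
      · refine ⟨e ⟨x, hx⟩, Or.inl ?_⟩
        have hxx : ((e.symm (e ⟨x, hx⟩)) : M) = x := by simp
        rw [hxx]
        exact ⟨hVmem x, by simp⟩
      · exact ⟨⟨0, by omega⟩, Or.inr hx⟩
    · intro i a ha b hb hab
      by_cases hfa : f a = y
      · have hfb : f b = y := hab ▸ hfa
        have ha' : a = (e.symm i : M) := by
          rcases ha with h | h
          · by_contra hne
            exact h.2 ⟨hfa, hne⟩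
          · exact absurd hfa h
        have hb' : b = (e.symm i : M) := by
          rcases hb with h | h
          · by_contra hne
            exact h.2 ⟨hfb, hne⟩
          · exact absurd hfb h
        rw [ha', hb']
      · exact hinj_out a b hab hfa
  · -- k ≤ IC f : each fiber point needs its own set
    apply le_sInf
    rintro n ⟨ℓ, rfl, hℓ, U, hUopen, hUcov, hUinj⟩
    rw [Nat.cast_le]
    have hchoice : ∀ x : (f ⁻¹' {y}), ∃ i : Fin ℓ, (x : M) ∈ U i := by
      intro x
      have : (x : M) ∈ ⋃ i, U i := hUcov ▸ Set.mem_univ _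
      exact Set.mem_iUnion.mp this
    choose g hg using hchoice
    have hginj : Function.Injective g := by
      intro a b hab
      have hfa : f (a : M) = y := a.2
      have hfb : f (b : M) = y := b.2
      have : (a : M) = (b : M) :=
        hUinj (g a) (hg a) (hab ▸ hg b) (by rw [hfa, hfb])
      exact Subtype.ext this
    calc k = Nat.card (f ⁻¹' {y}) := hcard.symm
      _ ≤ Nat.card (Fin ℓ) := Nat.card_le_card_of_injective g hginj
      _ = ℓ := by simp
end

section
/- Let X be a metric space with a free action of a finite group G of order > 1 such that for every continuous map h : X → ℝⁿ there exist x ∈ X and distinct g, g' ∈ G with h(gx) = h(g'x) (the 2-th Borsuk–Ulam property). Then for every cover of X by n+1 open sets U_1, ..., U_{n+1}, there is some U_j containing both gx and g'x for some x ∈ X and distinct g, g' ∈ G. Consequently, the quotient map q : X → X/G satisfies IC(q) ≥ n + 2. -/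
open Set

def HasBorsukUlamProperty (G X : Type*) [SMul G X] [TopologicalSpace X] (n : ℕ) : Prop :=
  ∀ h : X → EuclideanSpace ℝ (Fin n), Continuous h →
    ∃ (x : X) (g g' : G), g ≠ g' ∧ h (g • x) = h (g' • x)

theorem IsOpen.exists_continuous_mem_iff_ne_zero {X : Type*} [TopologicalSpace X]
    [PerfectlyNormalSpace X] {U : Set X} (hU : IsOpen U) :
    ∃ f : C(X, ℝ), ∀ x, x ∈ U ↔ f x ≠ 0 := by
  obtain ⟨f, hf, -⟩ :=
    perfectlyNormalSpace_iff_forall_isClosed_preimage_zero.mp ‹_› _ hU.isClosed_compl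
  exact ⟨f, fun x => by simpa using (Set.ext_iff.mp hf x).not⟩

theorem Fin.mem_last_of_forall_notMem_castSucc {X : Type*} {n : ℕ} {U : Fin (n + 1) → Set X}
    (hcover : ⋃ i, U i = univ) {y : X} (hy : ∀ i : Fin n, y ∉ U i.castSucc) :
    y ∈ U (Fin.last n) := by
  obtain ⟨j, hj⟩ := mem_iUnion.mp (hcover ▸ mem_univ y)
  cases j using Fin.lastCases with
  | last => exact hj
  | cast i => exact absurd hj (hy i)

theorem HasBorsukUlamProperty.exists_smul_mem_smul_mem {X G : Type*} [TopologicalSpace X]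
    [PerfectlyNormalSpace X] [SMul G X] {n : ℕ} (hBU : HasBorsukUlamProperty G X n)
    (U : Fin (n + 1) → Set X) (hopen : ∀ i, IsOpen (U i)) (hcover : ⋃ i, U i = univ) :
    ∃ (j : Fin (n + 1)) (x : X) (g g' : G), g ≠ g' ∧ g • x ∈ U j ∧ g' • x ∈ U j := by
  choose f hf using fun i : Fin n => (hopen i.castSucc).exists_continuous_mem_iff_ne_zero
  obtain ⟨x, g, g', hne, heq⟩ := hBU (fun y => WithLp.toLp 2 fun i => f i y) (by fun_prop)
  have hf_eq (i : Fin n) : f i (g • x) = f i (g' • x) := congrArg (· i) heq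
  have hmem_iff (i : Fin n) : g • x ∈ U i.castSucc ↔ g' • x ∈ U i.castSucc := by
    rw [hf, hf, hf_eq]
  by_cases h : ∃ i : Fin n, g • x ∈ U i.castSucc
  · obtain ⟨i, hi⟩ := h
    exact ⟨i.castSucc, x, g, g', hne, hi, (hmem_iff i).mp hi⟩
  · push Not at h
    exact ⟨Fin.last n, x, g, g', hne, Fin.mem_last_of_forall_notMem_castSucc hcover h,
      Fin.mem_last_of_forall_notMem_castSucc hcover fun i => (hmem_iff i).not.mp (h i)⟩

theorem eq_of_smul_eq_smul_of_free {X G : Type*} [Group G] [MulAction G X]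
    (hfree : ∀ (g : G) (x : X), g • x = x → g = 1) {g g' : G} {x : X}
    (h : g • x = g' • x) : g = g' :=
  (inv_mul_eq_one.mp <| hfree (g'⁻¹ * g) x <| by rw [mul_smul, h, inv_smul_smul]).symm

theorem le_IC_orbitRel_mk {X G : Type*} [TopologicalSpace X] [Group G] [MulAction G X]
    (hfree : ∀ (g : G) (x : X), g • x = x → g = 1) {n : ℕ}
    (h : ∀ U : Fin (n + 1) → Set X, (∀ i, IsOpen (U i)) → (⋃ i, U i) = univ →
      ∃ (j : Fin (n + 1)) (x : X) (g g' : G), g ≠ g' ∧ g • x ∈ U j ∧ g' • x ∈ U j) :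
    (n + 2 : ℕ∞) ≤ IC (Quotient.mk (MulAction.orbitRel G X)) := by
  refine le_sInf ?_
  rintro _ ⟨k, rfl, hk, U, hopen, hcover, hinj⟩
  by_contra hlt
  have hkn : k ≤ n + 1 := by
    have : (k : ℕ∞) < n + 2 := not_le.mp hlt
    exact Order.lt_add_one_iff.mp (by exact_mod_cast this)
  have : Nonempty (Fin k) := ⟨⟨0, hk⟩⟩
  -- Repeat members of the cover along a surjection `Fin (n + 1) → Fin k`.
  have hσ := Function.invFun_surjective (Fin.castLE_injective hkn)
  obtain ⟨j, x, g, g', hne, hg, hg'⟩ :=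
    h (U ∘ Function.invFun (Fin.castLE hkn)) (fun i => hopen _) (hσ.iUnion_comp U ▸ hcover)
  refine hne (eq_of_smul_eq_smul_of_free hfree (hinj _ hg hg' ?_))
  exact Quotient.sound (MulAction.orbitRel_apply.mpr (MulAction.smul_mem_orbit_smul g g' x))

theorem stmt_19_general {X : Type*} [MetricSpace X] {G : Type*} [Group G]
    [MulAction G X]
    (hfree : ∀ (g : G) (x : X), g • x = x → g = 1) (n : ℕ)
    (hBU : ∀ h : X → EuclideanSpace ℝ (Fin n), Continuous h →
      ∃ (x : X) (g g' : G), g ≠ g' ∧ h (g • x) = h (g' • x)) :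
    (∀ U : Fin (n + 1) → Set X, (∀ i, IsOpen (U i)) → (⋃ i, U i) = Set.univ →
      ∃ (j : Fin (n + 1)) (x : X) (g g' : G), g ≠ g' ∧ g • x ∈ U j ∧ g' • x ∈ U j) ∧
    ((n + 2 : ℕ∞) ≤ IC (Quotient.mk (MulAction.orbitRel G X))) := by
  have hcover := (show HasBorsukUlamProperty G X n from hBU).exists_smul_mem_smul_mem
  exact ⟨hcover, le_IC_orbitRel_mk hfree hcover⟩

theorem stmt_19 {X : Type*} [MetricSpace X] {G : Type*} [Group G] [Fintype G] [Nontrivial G]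
    [MulAction G X] (hcont : ∀ g : G, Continuous fun x : X => g • x)
    (hfree : ∀ (g : G) (x : X), g • x = x → g = 1) (n : ℕ)
    (hBU : ∀ h : X → EuclideanSpace ℝ (Fin n), Continuous h →
      ∃ (x : X) (g g' : G), g ≠ g' ∧ h (g • x) = h (g' • x)) :
    (∀ U : Fin (n + 1) → Set X, (∀ i, IsOpen (U i)) → (⋃ i, U i) = Set.univ →
      ∃ (j : Fin (n + 1)) (x : X) (g g' : G), g ≠ g' ∧ g • x ∈ U j ∧ g' • x ∈ U j) ∧
    ((n + 2 : ℕ∞) ≤ IC (Quotient.mk (MulAction.orbitRel G X))) :=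
  stmt_19_general hfree n hBU
end
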